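/- Let s > 0, let G̃_s(x) = ∫₀^∞ exp(−πx²/y − y/(4π))·y^{−(1+(1−s)/2)} dy, and define H_s(x) = −2πx·∫₀^∞ exp(−πx²/y − y/(4π))·y^{−(2+(1−s)/2)} dy. Then for every x ≠ 0 the function G̃_s is differentiable at x with derivative G̃_s′(x) = H_s(x), and for every p ∈ [1,∞] with s > 2 − 1/p (where 1/∞ = 0), the function H_s belongs to L^p(ℝ). -/

import Mathlib

open MeasureTheory Real
open scoped ENNReal NNReal

/-- The (unnormalized) Bessel potential kernel of order `s` in one dimension, given by the
subordination formula `G̃ₛ(x) = ∫₀^∞ e^{-πx²/y - y/(4π)} y^{-(1+(1-s)/2)} dy`. -/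
noncomputable def besselKernel (s : ℝ) (x : ℝ) : ℝ :=
  ∫ y in Set.Ioi (0:ℝ),
    Real.exp (-(π * x ^ 2) / y - y / (4 * π)) * y ^ (-(1 + (1 - s) / 2))

/-- The formal derivative of `G̃ₛ`, obtained by differentiating under the integral sign:
`Hₛ(x) = -2πx ∫₀^∞ e^{-πx²/y - y/(4π)} y^{-(2+(1-s)/2)} dy`. -/
noncomputable def besselKernelDeriv (s : ℝ) (x : ℝ) : ℝ :=
  -2 * π * x * ∫ y in Set.Ioi (0:ℝ),
    Real.exp (-(π * x ^ 2) / y - y / (4 * π)) * y ^ (-(2 + (1 - s) / 2))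

/-! With `b = -(1 + (1 - s)/2)`, the integrand of `Hₛ` is the `x`-derivative of that of `G̃ₛ`, so
the derivative formula is differentiation under the integral sign, dominated on `|t - x| < |x|/2`
by the integrand at `x/2`. For the `L^p` bound, AM–GM gives `πx²/(2y) + y/(8π) ≥ |x|/2`, so the
exponential factor splits as `e^{-|x|/2} e^{-πx²/(2y)} e^{-y/(8π)}`. Bounding
`e^{-t} ≤ ⌈k⌉! t^{-k}` in the middle factor leaves a convergent Gamma integral as soon as
`k > (3 - s)/2`, whence `|Hₛ(x)| ≤ C |x|^{1-2k} e^{-|x|/2}`. An exponent `r = 1 - 2k ≤ 1` with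
`-1/p < r < s - 2` exists exactly when `s > 2 - 1/p`, and then the majorant lies in `L^p`. -/

open Set
open scoped Nat

lemma rpow_mul_exp_neg_le_factorial {k t : ℝ} (hk : 0 ≤ k) (ht : 0 ≤ t) :
    t ^ k * exp (-t) ≤ (⌈k⌉₊)! := by
  rw [exp_neg, ← div_eq_mul_inv, div_le_iff₀ (exp_pos t)]
  rcases le_or_gt 1 t with h1 | h1
  · have hfac := Real.pow_div_factorial_le_exp t ht ⌈k⌉₊
    rw [div_le_iff₀ (by positivity), mul_comm] at hfac
    calc t ^ k ≤ t ^ (⌈k⌉₊ : ℝ) := rpow_le_rpow_of_exponent_le h1 (Nat.le_ceil k)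
      _ = t ^ ⌈k⌉₊ := rpow_natCast t _
      _ ≤ _ := hfac
  · calc t ^ k ≤ 1 := rpow_le_one ht h1.le hk
      _ ≤ (⌈k⌉₊)! * exp t :=
        one_le_mul_of_one_le_of_one_le (mod_cast Nat.factorial_pos _) (one_le_exp ht)

lemma exp_neg_div_le_factorial_mul_rpow {k a y : ℝ} (hk : 0 ≤ k) (ha : 0 < a) (hy : 0 < y) :
    exp (-(a / y)) ≤ (⌈k⌉₊)! * a ^ (-k) * y ^ k := by
  have h := rpow_mul_exp_neg_le_factorial hk (div_pos ha hy).le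
  rw [div_rpow ha.le hy.le, div_mul_eq_mul_div, div_le_iff₀ (by positivity),
    ← le_div_iff₀' (by positivity)] at h
  rw [rpow_neg ha.le]
  exact h.trans_eq (by ring)

lemma integrableOn_rpow_mul_exp_neg_mul {β c : ℝ} (hβ : -1 < β) (hc : 0 < c) :
    IntegrableOn (fun y : ℝ => y ^ β * exp (-(c * y))) (Ioi 0) := by
  simpa only [neg_mul, rpow_one] using
    integrableOn_rpow_mul_exp_neg_mul_rpow hβ zero_lt_one hc

noncomputable def besselIntegrand (b c y : ℝ) : ℝ :=
  exp (-c / y - y / (4 * π)) * y ^ b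

lemma besselKernelDeriv_eq (s x : ℝ) :
    besselKernelDeriv s x =
      -2 * π * x * ∫ y in Ioi 0, besselIntegrand (-(2 + (1 - s) / 2)) (π * x ^ 2) y :=
  rfl

lemma besselIntegrand_nonneg (b c : ℝ) {y : ℝ} (hy : 0 ≤ y) : 0 ≤ besselIntegrand b c y :=
  mul_nonneg (exp_pos _).le (rpow_nonneg hy b)

lemma besselIntegrand_le_of_le (b : ℝ) {c c' y : ℝ} (hc : c ≤ c') (hy : 0 < y) :
    besselIntegrand b c' y ≤ besselIntegrand b c y := by
  unfold besselIntegrand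
  gcongr

lemma measurable_besselIntegrand (b c : ℝ) : Measurable (besselIntegrand b c) := by
  unfold besselIntegrand
  fun_prop

lemma integrableOn_besselIntegrand (b : ℝ) {c : ℝ} (hc : 0 < c) :
    IntegrableOn (besselIntegrand b c) (Ioi 0) := by
  have hmaj := (integrableOn_rpow_mul_exp_neg_mul (β := |b| + b) (by linarith [neg_abs_le b])
    (by positivity : 0 < (4 * π)⁻¹)).const_mul ((⌈|b|⌉₊)! * c ^ (-|b|))
  refine hmaj.mono' (measurable_besselIntegrand b c).aestronglyMeasurable ?_
  filter_upwards [ae_restrict_mem measurableSet_Ioi] with y (hy : 0 < y)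
  rw [norm_of_nonneg (besselIntegrand_nonneg b c hy.le), besselIntegrand, neg_div,
    sub_eq_add_neg, exp_add, rpow_add hy]
  calc exp (-(c / y)) * exp (-(y / (4 * π))) * y ^ b
      ≤ (⌈|b|⌉₊)! * c ^ (-|b|) * y ^ |b| * exp (-(y / (4 * π))) * y ^ b := by
        gcongr
        exact exp_neg_div_le_factorial_mul_rpow (abs_nonneg b) hc hy
    _ = _ := by rw [div_eq_inv_mul]; ring

lemma hasDerivAt_besselIntegrand (b : ℝ) {y : ℝ} (hy : 0 < y) (x : ℝ) :
    HasDerivAt (fun x => besselIntegrand b (π * x ^ 2) y)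
      (-2 * π * x * besselIntegrand (b - 1) (π * x ^ 2) y) x := by
  have hexp : HasDerivAt (fun x => -(π * x ^ 2) / y - y / (4 * π)) (-(π * (2 * x)) / y) x := by
    simpa using (((hasDerivAt_pow 2 x).const_mul π).neg.div_const y).sub_const (y / (4 * π))
  refine (hexp.exp.mul_const (y ^ b)).congr_deriv ?_
  rw [besselIntegrand, rpow_sub_one hy.ne']
  field_simp

lemma hasDerivAt_integral_besselIntegrand (b : ℝ) {x : ℝ} (hx : x ≠ 0) :
    HasDerivAt (fun x => ∫ y in Ioi 0, besselIntegrand b (π * x ^ 2) y)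
      (-2 * π * x * ∫ y in Ioi 0, besselIntegrand (b - 1) (π * x ^ 2) y) x := by
  have hx2 : 0 < |x| / 2 := by positivity
  have key := hasDerivAt_integral_of_dominated_loc_of_deriv_le (μ := volume.restrict (Ioi 0))
    (F := fun x y => besselIntegrand b (π * x ^ 2) y)
    (F' := fun x y => -2 * π * x * besselIntegrand (b - 1) (π * x ^ 2) y)
    (bound := fun y => 2 * π * (2 * |x|) * besselIntegrand (b - 1) (π * (x / 2) ^ 2) y)
    (Metric.ball_mem_nhds x hx2) ?_ ?_ ?_ ?_ ?_ ?_
  · rw [← integral_const_mul]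
    exact key.2
  · exact Filter.Eventually.of_forall fun t =>
      (measurable_besselIntegrand b _).aestronglyMeasurable
  · exact integrableOn_besselIntegrand b (by positivity)
  · exact ((measurable_besselIntegrand _ _).const_mul _).aestronglyMeasurable
  · filter_upwards [ae_restrict_mem measurableSet_Ioi] with y (hy : 0 < y) t ht
    rw [Metric.mem_ball, dist_eq_norm] at ht
    have ht_le : |t| ≤ 2 * |x| := by
      linarith [norm_sub_norm_le t x, norm_eq_abs t, norm_eq_abs x]
    have hx_le : (x / 2) ^ 2 ≤ t ^ 2 := by
      rw [sq_le_sq, abs_div, abs_two]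
      linarith [norm_sub_norm_le x t, norm_sub_rev t x, norm_eq_abs t, norm_eq_abs x]
    rw [norm_mul, norm_of_nonneg (besselIntegrand_nonneg _ _ hy.le), norm_mul, norm_mul,
      norm_neg, norm_of_nonneg pi_pos.le, norm_two, norm_eq_abs]
    gcongr
    · exact besselIntegrand_nonneg _ _ hy.le
    · exact besselIntegrand_le_of_le _ (by gcongr) hy
  · exact (integrableOn_besselIntegrand _ (by positivity)).const_mul _
  · filter_upwards [ae_restrict_mem measurableSet_Ioi] with y (hy : 0 < y) t _
    exact hasDerivAt_besselIntegrand b hy t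

/-- AM–GM: `πx²/(2y) + y/(8π) ≥ |x|/2`, with defect `(2π|x| - y)²/(8πy)`. -/
lemma besselExponent_le (x : ℝ) {y : ℝ} (hy : 0 < y) :
    -(π * x ^ 2) / y - y / (4 * π) ≤
      -(2⁻¹ * |x|) + -(π * x ^ 2 / 2 / y) + -((8 * π)⁻¹ * y) := by
  have h : -(π * x ^ 2) / y - y / (4 * π) -
      (-(2⁻¹ * |x|) + -(π * x ^ 2 / 2 / y) + -((8 * π)⁻¹ * y)) =
        -((2 * π * |x| - y) ^ 2 / (8 * π * y)) := by
    rw [← sq_abs x]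
    field_simp
    ring
  have : 0 ≤ (2 * π * |x| - y) ^ 2 / (8 * π * y) := by positivity
  linarith

lemma integral_besselIntegrand_le {b k : ℝ} (hk : 0 ≤ k) (hkb : -1 < k + b) {x : ℝ}
    (hx : x ≠ 0) :
    ∫ y in Ioi 0, besselIntegrand b (π * x ^ 2) y ≤
      (⌈k⌉₊)! * (π * x ^ 2 / 2) ^ (-k) * exp (-(2⁻¹ * |x|)) *
        ∫ y in Ioi 0, y ^ (k + b) * exp (-((8 * π)⁻¹ * y)) := by
  rw [← integral_const_mul]
  refine setIntegral_mono_on (integrableOn_besselIntegrand b (by positivity))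
    ((integrableOn_rpow_mul_exp_neg_mul hkb (by positivity)).const_mul _) measurableSet_Ioi
    fun y (hy : 0 < y) => ?_
  have hsplit : exp (-(π * x ^ 2) / y - y / (4 * π)) ≤
      exp (-(2⁻¹ * |x|)) * exp (-(π * x ^ 2 / 2 / y)) * exp (-((8 * π)⁻¹ * y)) := by
    rw [← exp_add, ← exp_add]
    exact exp_le_exp.mpr (besselExponent_le x hy)
  calc besselIntegrand b (π * x ^ 2) y
      ≤ exp (-(2⁻¹ * |x|)) * exp (-(π * x ^ 2 / 2 / y)) * exp (-((8 * π)⁻¹ * y)) * y ^ b := by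
        unfold besselIntegrand
        gcongr
    _ ≤ exp (-(2⁻¹ * |x|)) * ((⌈k⌉₊)! * (π * x ^ 2 / 2) ^ (-k) * y ^ k) *
          exp (-((8 * π)⁻¹ * y)) * y ^ b := by
        gcongr
        exact exp_neg_div_le_factorial_mul_rpow hk (by positivity) hy
    _ = _ := by rw [rpow_add hy]; ring

lemma abs_besselKernelDeriv_le (s : ℝ) {r : ℝ} (hr : r ≤ 1) (hrs : r < s - 2) :
    ∃ C, ∀ x ≠ 0, |besselKernelDeriv s x| ≤ C * (|x| ^ r * exp (-(2⁻¹ * |x|))) := by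
  set k := (1 - r) / 2 with hk
  set D := ∫ y in Ioi 0, y ^ (k + -(2 + (1 - s) / 2)) * exp (-((8 * π)⁻¹ * y))
  refine ⟨2 * π * (⌈k⌉₊)! * (π / 2) ^ (-k) * D, fun x hx => ?_⟩
  have hax : 0 < |x| := abs_pos.mpr hx
  have hI := integral_besselIntegrand_le (b := -(2 + (1 - s) / 2)) (k := k) (by linarith [hk])
    (by linarith [hk]) hx
  have hpow : |x| * (π * x ^ 2 / 2) ^ (-k) = (π / 2) ^ (-k) * |x| ^ r := by
    rw [← sq_abs, ← rpow_two, mul_div_right_comm, mul_rpow (by positivity) (by positivity),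
      ← rpow_mul hax.le, show r = 1 + 2 * -k by ring, rpow_add hax, rpow_one]
    ring
  rw [besselKernelDeriv_eq, abs_mul, abs_of_nonneg (setIntegral_nonneg measurableSet_Ioi
    fun y (hy : 0 < y) => besselIntegrand_nonneg _ _ hy.le), abs_mul, abs_mul, abs_neg,
    abs_of_pos pi_pos, abs_two]
  calc 2 * π * |x| * ∫ y in Ioi 0, besselIntegrand (-(2 + (1 - s) / 2)) (π * x ^ 2) y
      ≤ 2 * π * |x| * ((⌈k⌉₊)! * (π * x ^ 2 / 2) ^ (-k) * exp (-(2⁻¹ * |x|)) * D) := by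
        gcongr
    _ = 2 * π * (⌈k⌉₊)! * (|x| * (π * x ^ 2 / 2) ^ (-k)) * exp (-(2⁻¹ * |x|)) * D := by ring
    _ = _ := by rw [hpow]; ring

lemma aestronglyMeasurable_besselKernelDeriv (s : ℝ) :
    AEStronglyMeasurable (besselKernelDeriv s) := by
  have h : StronglyMeasurable fun x =>
      ∫ y in Ioi 0, besselIntegrand (-(2 + (1 - s) / 2)) (π * x ^ 2) y :=
    StronglyMeasurable.integral_prod_right'
      (f := fun p : ℝ × ℝ => besselIntegrand _ (π * p.1 ^ 2) p.2)
      (by unfold besselIntegrand; fun_prop : Measurable _).stronglyMeasurable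
  exact ((measurable_const.mul measurable_id).mul h.measurable).aestronglyMeasurable

lemma integrable_abs_rpow_mul_exp_neg_mul_abs {β c : ℝ} (hβ : -1 < β) (hc : 0 < c) :
    Integrable fun x : ℝ => |x| ^ β * exp (-(c * |x|)) := by
  have hIoi : IntegrableOn (fun x : ℝ => |x| ^ β * exp (-(c * |x|))) (Ioi 0) :=
    (integrableOn_rpow_mul_exp_neg_mul hβ hc).congr_fun
      (fun x (hx : 0 < x) => by rw [abs_of_pos hx]) measurableSet_Ioi
  have hIic : IntegrableOn (fun x : ℝ => |x| ^ β * exp (-(c * |x|))) (Iic 0) := by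
    have hneg : MeasurableEmbedding fun x : ℝ => -x := (Homeomorph.neg ℝ).measurableEmbedding
    rw [← Measure.map_neg_eq_self (volume : Measure ℝ), hneg.integrableOn_map_iff]
    simp_rw [Function.comp_def, abs_neg, neg_preimage, neg_Iic, neg_zero]
    exact Iff.mpr integrableOn_Ici_iff_integrableOn_Ioi hIoi
  rw [← integrableOn_univ, ← Iic_union_Ioi (a := (0:ℝ))]
  exact hIic.union hIoi

lemma memLp_abs_rpow_mul_exp_neg_mul_abs {r c : ℝ} (hc : 0 < c) (p : ℝ≥0∞)
    (hr : -1 / p.toReal < r) :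
    MemLp (fun x : ℝ => |x| ^ r * exp (-(c * |x|))) p := by
  have hmeas : AEStronglyMeasurable (fun x : ℝ => |x| ^ r * exp (-(c * |x|))) :=
    (by fun_prop : Measurable fun x : ℝ => |x| ^ r * exp (-(c * |x|))).aestronglyMeasurable
  rcases eq_or_ne p 0 with rfl | hp0
  · exact memLp_zero_iff_aestronglyMeasurable.mpr hmeas
  rcases eq_or_ne p ∞ with rfl | hptop
  · simp only [ENNReal.toReal_top, div_zero] at hr
    refine memLp_top_of_bound hmeas (c ^ (-r) * (⌈r⌉₊)!) (Filter.Eventually.of_forall fun x => ?_)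
    have h := rpow_mul_exp_neg_le_factorial hr.le (by positivity : 0 ≤ c * |x|)
    rw [mul_rpow hc.le (abs_nonneg x), mul_assoc, ← le_div_iff₀' (by positivity),
      div_eq_inv_mul, ← rpow_neg hc.le] at h
    rwa [norm_of_nonneg (by positivity)]
  have hp : 0 < p.toReal := ENNReal.toReal_pos hp0 hptop
  rw [← memLp_norm_rpow_iff hmeas hp0 hptop, ENNReal.div_self hp0 hptop, memLp_one_iff_integrable]
  refine (integrable_abs_rpow_mul_exp_neg_mul_abs (β := r * p.toReal) (c := c * p.toReal)
    (by rwa [div_lt_iff₀ hp] at hr) (by positivity)).congr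
      (Filter.Eventually.of_forall fun x => ?_)
  dsimp only
  rw [norm_of_nonneg (by positivity), mul_rpow (by positivity) (exp_pos _).le,
    ← rpow_mul (abs_nonneg x), ← exp_mul]
  ring_nf

theorem besselKernelDeriv_hasDerivAt_and_memLp_general (s : ℝ) :
    (∀ x : ℝ, x ≠ 0 → HasDerivAt (besselKernel s) (besselKernelDeriv s x) x) ∧
    (∀ p : ℝ≥0∞, 1 ≤ p → 2 - 1 / p.toReal < s →
      MemLp (besselKernelDeriv s) p (volume : Measure ℝ)) := by
  refine ⟨fun x hx => ?_, fun p _ hps => ?_⟩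
  · have h := hasDerivAt_integral_besselIntegrand (-(1 + (1 - s) / 2)) hx
    rwa [show -(1 + (1 - s) / 2) - 1 = -(2 + (1 - s) / 2) by ring] at h
  · have hmin : -1 / p.toReal < min (s - 2) 1 := by
      rw [neg_div]
      refine lt_min (by linarith) ((neg_nonpos.mpr (by positivity)).trans_lt one_pos)
    obtain ⟨r, hpr, hrs⟩ := exists_between hmin
    obtain ⟨C, hC⟩ := abs_besselKernelDeriv_le s (hrs.le.trans (min_le_right _ _))
      (hrs.trans_le (min_le_left _ _))
    have hmaj := (memLp_abs_rpow_mul_exp_neg_mul_abs (by norm_num : (0:ℝ) < 2⁻¹) p hpr).const_mul C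
    refine hmaj.of_le (aestronglyMeasurable_besselKernelDeriv s) ?_
    filter_upwards [Measure.ae_ne volume 0] with x hx
    exact (hC x hx).trans (le_abs_self _)

/-- For `s > 0`, `G̃ₛ` is differentiable away from the origin with derivative `Hₛ`, and for
every `p ∈ [1,∞]` with `s > 2 - 1/p` (where `1/∞ = 0`), `Hₛ` belongs to `L^p(ℝ)`. -/
theorem besselKernelDeriv_hasDerivAt_and_memLp (s : ℝ) (hs : 0 < s) :
    (∀ x : ℝ, x ≠ 0 → HasDerivAt (besselKernel s) (besselKernelDeriv s x) x) ∧
    (∀ p : ℝ≥0∞, 1 ≤ p → 2 - 1 / p.toReal < s →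
      MemLp (besselKernelDeriv s) p (volume : Measure ℝ)) :=
  besselKernelDeriv_hasDerivAt_and_memLp_general s
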